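/- arXiv:1512.06943 — 2 statements merged into one kernel-verified Lean document; each statement's English description precedes it below -/
import Mathlib

section
/- Affine form of Farkas' Lemma (completeness direction): Let A be a real k×n matrix, b ∈ ℝᵏ, c ∈ ℝⁿ, β ∈ ℝ. Suppose the system Ax ≥ b has at least one solution. If cᵀx ≥ β holds for every x with Ax ≥ b, then there exists λ ∈ ℝᵏ with λ ≥ 0, Aᵀλ = c and λᵀb ≥ β. -/
/-!
Farkas' lemma for finitely many functionals on a vector space over an ordered field needs no
topology: it goes by induction on the number of functionals. If `y` separates `g` from the
`f i`, `i ∈ s`, but `f a y < 0`, the functionals `f i y • f a - f a y • f i` and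
`g y • f a - f a y • g` all vanish at `y`, and the induction hypothesis applied to them either
represents `g` as a nonnegative combination or yields a vector separating `g` from all of
`insert a s`.

The affine form follows by homogenization on `E × 𝕜`, with the functionals
`(x, t) ↦ φ i x - b i * t`, `(x, t) ↦ t` and `(x, t) ↦ ψ x - β * t`. A separating `(x, t)` with
`t > 0` rescales to a feasible point violating the bound; with `t = 0`, `x` is a recession
direction of the feasible set along which `ψ` decreases without bound.
-/

open Finset Module

lemma Finset.exists_nonneg_sum_insert_smul_eq {R M ι : Type*} [Semiring R] [LE R]
    [AddCommMonoid M] [Module R M] [DecidableEq ι] {s : Finset ι} {a : ι} (ha : a ∉ s)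
    (v : ι → M) {w : ι → R} (hw : ∀ i ∈ s, 0 ≤ w i) {r : R} (hr : 0 ≤ r) :
    ∃ w' : ι → R, (∀ i ∈ insert a s, 0 ≤ w' i) ∧
      ∑ i ∈ insert a s, w' i • v i = r • v a + ∑ i ∈ s, w i • v i := by
  have hupd : ∀ i ∈ s, Function.update w a r i = w i := fun i hi =>
    Function.update_of_ne (ne_of_mem_of_not_mem hi ha) _ _
  refine ⟨Function.update w a r, ?_, ?_⟩
  · rw [forall_mem_insert, Function.update_self]
    exact ⟨hr, fun i hi => hupd i hi ▸ hw i hi⟩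
  · rw [sum_insert ha, Function.update_self, sum_congr rfl fun i hi => by rw [hupd i hi]]

section Farkas

variable {𝕜 E ι : Type*} [Field 𝕜] [LinearOrder 𝕜] [IsStrictOrderedRing 𝕜]
  [AddCommGroup E] [Module 𝕜 E]

lemma Module.Dual.exists_apply_neg_of_ne_zero {g : Dual 𝕜 E} (hg : g ≠ 0) : ∃ y, g y < 0 := by
  obtain ⟨y, hy⟩ : ∃ y, g y ≠ 0 := by
    by_contra! h
    exact hg (LinearMap.ext h)
  rcases hy.lt_or_gt with hneg | hpos
  · exact ⟨y, hneg⟩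
  · exact ⟨-y, by simpa using hpos⟩

lemma Module.Dual.eq_smul_add_sum_of_sum_smul_sub_smul_eq {s : Finset ι} {f : ι → Dual 𝕜 E}
    {a : ι} {g : Dual 𝕜 E} {y : E} (hfa : f a y ≠ 0) {w : ι → 𝕜}
    (hsum : ∑ i ∈ s, w i • (f i y • f a - f a y • f i) = g y • f a - f a y • g) :
    g = ((g y - ∑ i ∈ s, w i * f i y) / f a y) • f a + ∑ i ∈ s, w i • f i := by
  ext z
  have hz := LinearMap.congr_fun hsum z
  simp only [LinearMap.sum_apply, LinearMap.smul_apply, LinearMap.sub_apply, smul_eq_mul,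
    mul_sub, sum_sub_distrib, ← mul_assoc, ← sum_mul] at hz
  simp only [mul_comm _ (f a y), mul_assoc, ← mul_sum] at hz
  simp only [LinearMap.add_apply, LinearMap.smul_apply, LinearMap.sum_apply, smul_eq_mul]
  rw [div_mul_eq_mul_div, div_add' _ _ _ hfa, eq_div_iff hfa]
  linear_combination hz

theorem Module.Dual.exists_nonneg_sum_smul_eq_or_exists_neg (s : Finset ι) (f : ι → Dual 𝕜 E)
    (g : Dual 𝕜 E) :
    (∃ w : ι → 𝕜, (∀ i ∈ s, 0 ≤ w i) ∧ ∑ i ∈ s, w i • f i = g) ∨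
      ∃ y, (∀ i ∈ s, 0 ≤ f i y) ∧ g y < 0 := by
  classical
  induction s using Finset.induction_on generalizing f g with
  | empty =>
    by_cases hg : g = 0
    · exact .inl ⟨0, by simp, by simp [hg]⟩
    · exact .inr <| (exists_apply_neg_of_ne_zero hg).imp fun y hy => ⟨by simp, hy⟩
  | insert a s ha ih =>
    obtain ⟨w, hw, rfl⟩ | ⟨y, hf, hg⟩ := ih f g
    · exact .inl <| by simpa using exists_nonneg_sum_insert_smul_eq ha f hw le_rfl
    rcases le_or_gt 0 (f a y) with hfa | hfa
    · exact .inr ⟨y, forall_mem_insert _ _ _ |>.2 ⟨hfa, hf⟩, hg⟩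
    obtain ⟨w, hw, hsum⟩ | ⟨y', hf', hg'⟩ :=
      ih (fun i => f i y • f a - f a y • f i) (g y • f a - f a y • g)
    · have hr : 0 ≤ (g y - ∑ i ∈ s, w i * f i y) / f a y := by
        have := sum_nonneg fun i hi => mul_nonneg (hw i hi) (hf i hi)
        exact div_nonneg_of_nonpos (by linarith) hfa.le
      rw [eq_smul_add_sum_of_sum_smul_sub_smul_eq hfa.ne hsum]
      exact .inl (exists_nonneg_sum_insert_smul_eq ha f hw hr)
    · refine .inr ⟨f a y' • y - f a y • y', ?_, by simpa [mul_comm] using hg'⟩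
      rw [forall_mem_insert]
      exact ⟨by simp [mul_comm], fun i hi => by simpa [mul_comm] using hf' i hi⟩

variable {φ : ι → Dual 𝕜 E} {ψ : Dual 𝕜 E} {b : ι → 𝕜} {β : 𝕜}

lemma Module.Dual.mul_le_apply_of_forall_mul_le (hfeas : ∃ x, ∀ i, b i ≤ φ i x)
    (h : ∀ x, (∀ i, b i ≤ φ i x) → β ≤ ψ x) {x : E} {t : 𝕜} (ht : 0 ≤ t)
    (hx : ∀ i, b i * t ≤ φ i x) : β * t ≤ ψ x := by
  rcases ht.lt_or_eq with ht | rfl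
  · have := h (t⁻¹ • x) fun i => by
      rw [map_smul, smul_eq_mul, le_inv_mul_iff₀ ht, mul_comm]
      exact hx i
    rwa [map_smul, smul_eq_mul, le_inv_mul_iff₀ ht, mul_comm] at this
  · obtain ⟨x₀, hx₀⟩ := hfeas
    simp only [mul_zero] at hx ⊢
    by_contra! hneg
    set s := (ψ x₀ - β + 1) / -ψ x
    have hs : 0 ≤ s := div_nonneg (by linarith [h x₀ hx₀]) (by linarith)
    have := h (x₀ + s • x) fun i => by
      simpa using le_add_of_le_of_nonneg (hx₀ i) (mul_nonneg hs (hx i))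
    have hsψ : s * ψ x = -(ψ x₀ - β + 1) := by
      simp only [s]
      field_simp [hneg.ne]
    simp only [map_add, map_smul, smul_eq_mul] at this
    linarith

theorem Module.Dual.exists_nonneg_sum_smul_eq_of_forall_le [Fintype ι]
    (hfeas : ∃ x, ∀ i, b i ≤ φ i x) (h : ∀ x, (∀ i, b i ≤ φ i x) → β ≤ ψ x) :
    ∃ w : ι → 𝕜, (∀ i, 0 ≤ w i) ∧ ∑ i, w i • φ i = ψ ∧ β ≤ ∑ i, w i * b i := by
  let F : Option ι → Dual 𝕜 (E × 𝕜) := fun o =>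
    o.elim (LinearMap.snd 𝕜 E 𝕜) fun i => φ i ∘ₗ LinearMap.fst 𝕜 E 𝕜 - b i • LinearMap.snd 𝕜 E 𝕜
  let G : Dual 𝕜 (E × 𝕜) := ψ ∘ₗ LinearMap.fst 𝕜 E 𝕜 - β • LinearMap.snd 𝕜 E 𝕜
  obtain ⟨w, hw, hsum⟩ | ⟨⟨x, t⟩, hF, hG⟩ := exists_nonneg_sum_smul_eq_or_exists_neg univ F G
  · refine ⟨w ∘ some, fun i => hw _ (mem_univ _), ?_, ?_⟩
    · ext z
      simpa [F, G, Fintype.sum_option] using LinearMap.congr_fun hsum (z, 0)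
    · have := LinearMap.congr_fun hsum (0, 1)
      simp only [Fintype.sum_option, Option.elim_none, Option.elim_some, LinearMap.add_apply,
        LinearMap.smul_apply, LinearMap.snd_apply, smul_eq_mul, mul_one, LinearMap.coe_sum,
        LinearMap.coe_smul, Finset.sum_apply, Pi.smul_apply, LinearMap.sub_apply, LinearMap.coe_comp,
        LinearMap.coe_fst, Function.comp_apply, map_zero, zero_sub, mul_neg, sum_neg_distrib, F, G]
        at this
      simp only [Function.comp_apply]
      linarith [hw none (mem_univ _)]
  · have ht := hF none (mem_univ _)
    have hx i := hF (some i) (mem_univ _)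
    simp only [Option.elim_none, LinearMap.snd_apply, Option.elim_some, LinearMap.sub_apply,
      LinearMap.coe_comp, LinearMap.coe_fst, Function.comp_apply, LinearMap.smul_apply, smul_eq_mul,
      sub_nonneg, sub_neg, F, G] at ht hx hG
    exact absurd (mul_le_apply_of_forall_mul_le hfeas h ht hx) hG.not_ge

end Farkas

theorem farkas_affine_complete (k n : ℕ) (A : Matrix (Fin k) (Fin n) ℝ)
    (b : Fin k → ℝ) (c : Fin n → ℝ) (β : ℝ)
    (hfeas : ∃ x : Fin n → ℝ, ∀ i, A.mulVec x i ≥ b i)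
    (h : ∀ x : Fin n → ℝ, (∀ i, A.mulVec x i ≥ b i) → dotProduct c x ≥ β) :
    ∃ lam : Fin k → ℝ, (∀ i, 0 ≤ lam i) ∧ A.transpose.mulVec lam = c ∧ dotProduct lam b ≥ β := by
  obtain ⟨lam, hlam, hsum, hb⟩ := Module.Dual.exists_nonneg_sum_smul_eq_of_forall_le
    (φ := fun i => dotProductEquiv ℝ (Fin n) (A i)) (ψ := dotProductEquiv ℝ (Fin n) c) hfeas h
  refine ⟨lam, hlam, ?_, hb⟩
  rw [Matrix.mulVec_transpose, Matrix.vecMul_eq_sum]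
  apply (dotProductEquiv ℝ (Fin n)).injective
  simpa [map_sum] using hsum
end

section
/- The order-sorted Toyama rewrite system terminates: there is no infinite sequence t₀ → t₁ → t₂ → ⋯ of well-sorted terms, where → is the one-step order-sorted rewrite relation generated by the rules f(0,1,x) → f(x,x,x) (x of sort S2), g(y,z) → y, and g(y,z) → z (y,z of sort S1). -/
/-- Terms over the Toyama signature: constants 0 and 1, ternary f, binary g. -/
inductive Tm : Type
  | zero : Tm
  | one : Tm
  | f : Tm → Tm → Tm → Tm
  | g : Tm → Tm → Tm

/-- Terms of sort S2: the only rank declaration yielding S2 is 0 : S2. -/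
inductive IsS2 : Tm → Prop
  | zero : IsS2 Tm.zero

/-- Terms of sort S1: 0 (by subsort S2 < S1), 1, and g applied to terms of sort S1. -/
inductive IsS1 : Tm → Prop
  | zero : IsS1 Tm.zero
  | one : IsS1 Tm.one
  | g {a b : Tm} : IsS1 a → IsS1 b → IsS1 (Tm.g a b)

/-- Terms of sort S: f applied to terms of sort S1. -/
inductive IsS : Tm → Prop
  | f {a b c : Tm} : IsS1 a → IsS1 b → IsS1 c → IsS (Tm.f a b c)

/-- Well-sorted terms: terms of some sort (S2 ≤ S1). -/
def WellSorted (t : Tm) : Prop := IsS t ∨ IsS1 t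

/-- One-step order-sorted rewriting: rule applications (with well-sorted
instantiations of the rule variables, x of sort S2, y z of sort S1)
closed under the congruence rules for f and g. -/
inductive Step : Tm → Tm → Prop
  | rule1 {x : Tm} : IsS2 x → Step (Tm.f Tm.zero Tm.one x) (Tm.f x x x)
  | rule2 {y z : Tm} : IsS1 y → IsS1 z → Step (Tm.g y z) y
  | rule3 {y z : Tm} : IsS1 y → IsS1 z → Step (Tm.g y z) z
  | f₁ {a a' b c : Tm} : Step a a' → Step (Tm.f a b c) (Tm.f a' b c)
  | f₂ {a b b' c : Tm} : Step b b' → Step (Tm.f a b c) (Tm.f a b' c)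
  | f₃ {a b c c' : Tm} : Step c c' → Step (Tm.f a b c) (Tm.f a b c')
  | g₁ {a a' b : Tm} : Step a a' → Step (Tm.g a b) (Tm.g a' b)
  | g₂ {a b b' : Tm} : Step b b' → Step (Tm.g a b) (Tm.g a b')

def mu : Tm → ℕ
  | Tm.zero => 1
  | Tm.one => 2
  | Tm.f a b c => 1 + mu a + mu b + mu c
  | Tm.g a b => 1 + mu a + mu b

lemma mu_pos (t : Tm) : 0 < mu t := by
  cases t <;> simp [mu]

lemma step_mu_lt {a b : Tm} (h : Step a b) : mu b < mu a := by
  induction h with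
  | rule1 hx => cases hx; simp [mu]
  | @rule2 y z _ _ => have := mu_pos z; simp only [mu]; omega
  | @rule3 y z _ _ => have := mu_pos y; simp only [mu]; omega
  | f₁ _ ih => simp [mu]; omega
  | f₂ _ ih => simp [mu]; omega
  | f₃ _ ih => simp [mu]; omega
  | g₁ _ ih => simp [mu]; omega
  | g₂ _ ih => simp [mu]; omega

theorem toyamaOS_terminating :
    ¬ ∃ u : ℕ → Tm, (∀ n, WellSorted (u n)) ∧ ∀ n, Step (u n) (u (n + 1)) := by
  rintro ⟨u, _, hstep⟩
  have hdec : ∀ n, mu (u (n + 1)) < mu (u n) := fun n => step_mu_lt (hstep n)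
  have : ∀ n, mu (u n) + n ≤ mu (u 0) := by
    intro n
    induction n with
    | zero => omega
    | succ k ih => have := hdec k; omega
  have := this (mu (u 0) + 1)
  have := mu_pos (u (mu (u 0) + 1))
  omega
end
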